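/- Well-definedness of the canonical accessibility relation: let φ and ψ be L≻-formulas such that /φ/ = /ψ/, i.e., for every maximal consistent set Γ and every i with 1 ≤ i ≤ m, J_{(i−1)/(m−1)}(φ) ∈ Γ if and only if J_{(i−1)/(m−1)}(ψ) ∈ Γ. Then for all maximal consistent sets x and y, inf{ a → b : a, b ∈ T, θ an L≻-formula with J_a(φ ≻ θ) ∈ x and J_b(θ) ∈ y } = inf{ a → b : a, b ∈ T, θ an L≻-formula with J_a(ψ ≻ θ) ∈ x and J_b(θ) ∈ y }. -/

import Mathlib

namespace LCR

/-- Łukasiewicz negation on ℝ. -/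
noncomputable def lneg (a : ℝ) : ℝ := 1 - a

/-- Łukasiewicz implication on ℝ. -/
noncomputable def limp (a b : ℝ) : ℝ := min 1 (1 - a + b)

/-- Łukasiewicz strong conjunction ⊙ on ℝ. -/
noncomputable def lodot (a b : ℝ) : ℝ := max 0 (a + b - 1)

/-- The truth-value set T = {0, 1/(m−1), …, 1}. -/
def Tset (m : ℕ) : Set ℝ := {a | ∃ i : Fin m, a = (i : ℝ) / ((m : ℝ) - 1)}

/-- The k-th truth value k/(m−1). -/
noncomputable def tv (m : ℕ) (k : Fin m) : ℝ := (k : ℝ) / ((m : ℝ) - 1)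

/-- Formulas of the language L≻. -/
inductive Formula : Type where
  | var  : ℕ → Formula
  | neg  : Formula → Formula
  | imp  : Formula → Formula → Formula
  | cond : Formula → Formula → Formula
deriving DecidableEq

namespace Formula
/-- φ ∨ ψ := (φ → ψ) → ψ. -/
def or (φ ψ : Formula) : Formula := .imp (.imp φ ψ) ψ
/-- φ ∧ ψ := ¬(¬φ ∨ ¬ψ). -/
def and (φ ψ : Formula) : Formula := .neg (Formula.or (.neg φ) (.neg ψ))
/-- φ ↔ ψ := (φ → ψ) ∧ (ψ → φ). -/
def iff (φ ψ : Formula) : Formula := Formula.and (.imp φ ψ) (.imp ψ φ)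
end Formula

/-- Purely propositional (¬,→)-formulas. -/
inductive PForm : Type where
  | var : ℕ → PForm
  | neg : PForm → PForm
  | imp : PForm → PForm → PForm

/-- Evaluation of a propositional formula under an assignment. -/
noncomputable def PForm.eval (σ : ℕ → ℝ) : PForm → ℝ
  | .var n => σ n
  | .neg φ => lneg (PForm.eval σ φ)
  | .imp φ ψ => limp (PForm.eval σ φ) (PForm.eval σ ψ)

/-- Tautology of Łukasiewicz m-valued propositional logic. -/
def PForm.Taut (m : ℕ) (φ : PForm) : Prop :=
  ∀ σ : ℕ → ℝ, (∀ n, σ n ∈ Tset m) → PForm.eval σ φ = 1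

/-- Substitution of L≻-formulas for the variables of a propositional formula. -/
def PForm.subst (σ : ℕ → Formula) : PForm → Formula
  | .var n => σ n
  | .neg φ => .neg (PForm.subst σ φ)
  | .imp φ ψ => .imp (PForm.subst σ φ) (PForm.subst σ ψ)

/-- `J` is a family of Rosser–Turquette J-operators: each `J a` is obtained by substitution
into a (¬,→)-definable one-place connective whose value is 1 at inputs equal to `tv m a`
and 0 at all other truth values. -/
def IsJFamily (m : ℕ) (J : Fin m → Formula → Formula) : Prop :=
  ∃ P : Fin m → PForm,
    (∀ a φ, J a φ = PForm.subst (fun _ => φ) (P a)) ∧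
    (∀ (a : Fin m) (σ : ℕ → ℝ), (∀ n, σ n ∈ Tset m) →
      PForm.eval σ (P a) = if σ 0 = tv m a then 1 else 0)

/-- `I` is a family of threshold operators: each `I a` is obtained by substitution into a
(¬,→)-definable one-place connective whose value is 1 at inputs ≥ `tv m a` and 0 otherwise. -/
def IsIFamily (m : ℕ) (I : Fin m → Formula → Formula) : Prop :=
  ∃ P : Fin m → PForm,
    (∀ a φ, I a φ = PForm.subst (fun _ => φ) (P a)) ∧
    (∀ (a : Fin m) (σ : ℕ → ℝ), (∀ n, σ n ∈ Tset m) →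
      PForm.eval σ (P a) = if tv m a ≤ σ 0 then 1 else 0)

/-- The index of aᵢ = (m−i)/(m−1) for i = j+1, i.e. m−1−j. -/
def revIdx {m : ℕ} (j : Fin m) : Fin m := ⟨m - 1 - j.1, by have := j.isLt; omega⟩

/-- Index-level strong conjunction: tv (odotIdx a b) = tv a ⊙ tv b. -/
def odotIdx {m : ℕ} (a b : Fin m) : Fin m :=
  ⟨a.1 + b.1 - (m - 1), by have := a.isLt; have := b.isLt; omega⟩

/-- Nested implication →ⁿᵢ₌₁(φᵢ, ψ) = φₙ → (φₙ₋₁ → (⋯ → (φ₁ → ψ))), with φᵢ = f (i−1). -/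
def nestImp : (n : ℕ) → (Fin n → Formula) → Formula → Formula
  | 0, _, ψ => ψ
  | n+1, f, ψ => .imp (f (Fin.last n)) (nestImp n (fun i => f i.castSucc) ψ)

/-- Theorems of the system LCR (relative to the I-operators used in the rules R_a). -/
inductive Thm (m : ℕ) (I : Fin m → Formula → Formula) : Formula → Prop where
  | taut : ∀ (ψ : PForm) (σ : ℕ → Formula), PForm.Taut m ψ → Thm m I (PForm.subst σ ψ)
  | a1 : ∀ φ ψ θ : Formula,
      Thm m I (.imp (.cond φ (ψ.and θ)) ((Formula.cond φ ψ).and (.cond φ θ)))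
  | a2 : ∀ φ ψ θ : Formula,
      Thm m I (.imp ((Formula.cond φ ψ).and (.cond φ θ)) (.cond φ (ψ.and θ)))
  | a3 : ∀ (φ : Formula) (p : ℕ), Thm m I (.cond φ (.imp (.var p) (.var p)))
  | mp : ∀ φ ψ : Formula, Thm m I (.imp φ ψ) → Thm m I φ → Thm m I ψ
  | rcea : ∀ φ ψ θ : Formula,
      Thm m I (φ.iff ψ) → Thm m I ((Formula.cond φ θ).iff (.cond ψ θ))
  | rcec : ∀ φ ψ θ : Formula,
      Thm m I (φ.iff ψ) → Thm m I ((Formula.cond θ φ).iff (.cond θ ψ))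
  | ra : ∀ (a : Fin m) (φ : Formula) (γ : Fin m → Formula) (δ : Formula),
      (∀ b : Fin m,
        Thm m I (nestImp m (fun j => I (odotIdx (revIdx j) b) (γ j)) (I (odotIdx a b) δ))) →
      Thm m I (nestImp m (fun j => I (revIdx j) (.cond φ (γ j))) (I a (.cond φ δ)))

/-- Γ ⊢_LCR φ : derivability from Γ by theorems of LCR and modus ponens. -/
inductive Deriv (m : ℕ) (I : Fin m → Formula → Formula) (Γ : Set Formula) : Formula → Prop where
  | thm : ∀ φ, Thm m I φ → Deriv m I Γ φ
  | mem : ∀ φ, φ ∈ Γ → Deriv m I Γ φ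
  | mp : ∀ φ ψ, Deriv m I Γ (.imp φ ψ) → Deriv m I Γ φ → Deriv m I Γ ψ

/-- A Kripke LCR model over a set of worlds W. -/
structure Model (m : ℕ) (W : Type) : Type where
  ne : Nonempty W
  R : (Fin m → Set W) → W → W → ℝ
  R_mem : ∀ X x y, R X x y ∈ Tset m
  v : ℕ → W → ℝ
  v_mem : ∀ p x, v p x ∈ Tset m

/-- Valuation of formulas in a Kripke LCR model. -/
noncomputable def Model.val {m : ℕ} {W : Type} (M : Model m W) : Formula → W → ℝ
  | .var p, x => M.v p x
  | .neg φ, x => lneg (M.val φ x)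
  | .imp φ ψ, x => limp (M.val φ x) (M.val ψ x)
  | .cond φ ψ, x =>
      sInf (Set.range fun y : W =>
        limp (M.R (fun i => {z : W | M.val φ z = tv m i}) x y) (M.val ψ y))

/-- Semantic consequence Γ ⊨ φ over all Kripke LCR models. -/
def Entails (m : ℕ) (Γ : Set Formula) (φ : Formula) : Prop :=
  ∀ (W : Type) (M : Model m W) (x : W), (∀ ψ ∈ Γ, M.val ψ x = 1) → M.val φ x = 1

/-- Syntactic consistency. -/
def Consistent (m : ℕ) (I : Fin m → Formula → Formula) (Γ : Set Formula) : Prop :=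
  ¬ ∃ φ : Formula, Deriv m I Γ φ ∧ Deriv m I Γ (.neg φ)

/-- Maximal consistency. -/
def MaxConsistent (m : ℕ) (I : Fin m → Formula → Formula) (Γ : Set Formula) : Prop :=
  Consistent m I Γ ∧ ∀ φ : Formula, Deriv m I Γ φ → φ ∈ Γ


/-- The canonical accessibility relation x R^c_{/φ/} y =
inf{ a → b : J_a(φ ≻ ψ) ∈ x and J_b(ψ) ∈ y }. -/
noncomputable def canonR (m : ℕ) (J : Fin m → Formula → Formula)
    (x y : Set Formula) (φ : Formula) : ℝ :=
  sInf {r : ℝ | ∃ (a b : Fin m) (ψ : Formula),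
    J a (.cond φ ψ) ∈ x ∧ J b ψ ∈ y ∧ r = limp (tv m a) (tv m b)}

/-- The worlds of the canonical model: the maximal consistent sets. -/
def CanonW (m : ℕ) (I : Fin m → Formula → Formula) : Type :=
  {Γ : Set Formula // MaxConsistent m I Γ}
/-! ### Auxiliary machinery for Statement 11 -/

section WellDefAux

variable {m : ℕ}

/- Basic real-valued facts about the Łukasiewicz operations. -/

lemma limp_le_one' (a b : ℝ) : limp a b ≤ 1 := min_le_left _ _

lemma limp_nonneg' {a b : ℝ} (ha : a ≤ 1) (hb : 0 ≤ b) : 0 ≤ limp a b :=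
  le_min (by norm_num) (by linarith)

lemma limp_eq_one {a b : ℝ} (h : a ≤ b) : limp a b = 1 :=
  min_eq_left (by linarith)

lemma limp_self' (a : ℝ) : limp a a = 1 := limp_eq_one le_rfl

lemma limp_zero_left' {b : ℝ} (hb : 0 ≤ b) : limp 0 b = 1 := limp_eq_one hb

lemma limp_one_left' {b : ℝ} (hb : b ≤ 1) : limp 1 b = b := by
  unfold limp
  rw [show (1:ℝ) - 1 + b = b by ring]
  exact min_eq_right hb

lemma limp_one_right' {a : ℝ} (ha : a ≤ 1) : limp a 1 = 1 := limp_eq_one ha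

lemma piff_val (a b : ℝ) : min (limp a b) (limp b a) = 1 - |a - b| := by
  rcases le_total a b with h | h
  · rw [limp_eq_one h, abs_of_nonpos (by linarith : a - b ≤ 0)]
    unfold limp
    rw [min_eq_right (by linarith : (1:ℝ) - b + a ≤ 1),
        min_eq_right (by linarith : (1:ℝ) - b + a ≤ 1)]
    ring
  · rw [limp_eq_one h, abs_of_nonneg (by linarith : (0:ℝ) ≤ a - b)]
    unfold limp
    rw [min_eq_left (min_le_left (1:ℝ) (1 - a + b)),
        min_eq_right (by linarith : (1:ℝ) - a + b ≤ 1)]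
    ring

/- Bounds on evaluations. -/

lemma eval_mem_Icc {σ : ℕ → ℝ} (hσ : ∀ n, σ n ∈ Set.Icc (0:ℝ) 1) :
    ∀ χ : PForm, PForm.eval σ χ ∈ Set.Icc (0:ℝ) 1
  | .var n => hσ n
  | .neg χ => by
      have h := eval_mem_Icc hσ χ
      simp only [PForm.eval, lneg, Set.mem_Icc] at *
      constructor <;> linarith [h.1, h.2]
  | .imp χ ρ => by
      have h1 := eval_mem_Icc hσ χ
      have h2 := eval_mem_Icc hσ ρ
      simp only [PForm.eval, Set.mem_Icc] at *
      exact ⟨limp_nonneg' h1.2 h2.1, limp_le_one' _ _⟩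

lemma Tset_subset_Icc (hm : 2 ≤ m) : Tset m ⊆ Set.Icc (0:ℝ) 1 := by
  rintro a ⟨i, rfl⟩
  have hm1 : (1:ℝ) ≤ (m:ℝ) - 1 := by
    have : (2:ℝ) ≤ (m:ℝ) := by exact_mod_cast hm
    linarith
  have hi : ((i : ℕ) : ℝ) ≤ (m:ℝ) - 1 := by
    have h1 : (i : ℕ) + 1 ≤ m := i.isLt
    have h2 : (((i : ℕ) : ℝ)) + 1 ≤ (m : ℝ) := by exact_mod_cast h1
    linarith
  constructor
  · exact div_nonneg (Nat.cast_nonneg _) (by linarith)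
  · rw [div_le_one (by linarith)]
    linarith

lemma tv_diff (hm : 2 ≤ m) {u v : ℝ} (hu : u ∈ Tset m) (hv : v ∈ Tset m)
    (hne : u ≠ v) : 1 / ((m:ℝ) - 1) ≤ |u - v| := by
  obtain ⟨i, rfl⟩ := hu
  obtain ⟨j, rfl⟩ := hv
  have hm1 : (1:ℝ) ≤ (m:ℝ) - 1 := by
    have : (2:ℝ) ≤ (m:ℝ) := by exact_mod_cast hm
    linarith
  have hd : (0:ℝ) < (m:ℝ) - 1 := by linarith
  have hij : ((i : ℕ) : ℝ) ≠ ((j : ℕ) : ℝ) := by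
    intro hh
    exact hne (by rw [hh])
  have hijn : (i : ℕ) ≠ (j : ℕ) := fun hh => hij (by exact_mod_cast hh)
  have h1 : (1:ℝ) ≤ |((i:ℕ):ℝ) - ((j:ℕ):ℝ)| := by
    rcases Nat.lt_or_ge (i:ℕ) (j:ℕ) with hh | hh
    · rw [abs_sub_comm, abs_of_nonneg]
      · have : (i:ℕ) + 1 ≤ (j:ℕ) := hh
        have : (((i:ℕ)):ℝ) + 1 ≤ ((j:ℕ):ℝ) := by exact_mod_cast this
        linarith
      · have : ((i:ℕ):ℝ) ≤ ((j:ℕ):ℝ) := by exact_mod_cast hh.le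
        linarith
    · have hlt : (j:ℕ) < (i:ℕ) := lt_of_le_of_ne hh (fun hh2 => hijn hh2.symm)
      rw [abs_of_nonneg]
      · have : (j:ℕ) + 1 ≤ (i:ℕ) := hlt
        have : (((j:ℕ)):ℝ) + 1 ≤ ((i:ℕ):ℝ) := by exact_mod_cast this
        linarith
      · have : ((j:ℕ):ℝ) ≤ ((i:ℕ):ℝ) := by exact_mod_cast hlt.le
        linarith
  rw [div_sub_div_same, abs_div, abs_of_pos hd]
  gcongr

/- Substitution machinery. -/

/-- Substitution of propositional formulas into a propositional formula. -/
def PForm.psubst (τ : ℕ → PForm) : PForm → PForm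
  | .var n => τ n
  | .neg φ => .neg (PForm.psubst τ φ)
  | .imp φ ψ => .imp (PForm.psubst τ φ) (PForm.psubst τ ψ)

lemma subst_psubst (σ : ℕ → Formula) (τ : ℕ → PForm) :
    ∀ χ : PForm, PForm.subst σ (PForm.psubst τ χ) =
      PForm.subst (fun n => PForm.subst σ (τ n)) χ
  | .var n => rfl
  | .neg χ => by simp only [PForm.psubst, PForm.subst, subst_psubst σ τ χ]
  | .imp χ ρ => by
      simp only [PForm.psubst, PForm.subst, subst_psubst σ τ χ, subst_psubst σ τ ρ]

lemma eval_psubst (σ : ℕ → ℝ) (τ : ℕ → PForm) :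
    ∀ χ : PForm, PForm.eval σ (PForm.psubst τ χ) =
      PForm.eval (fun n => PForm.eval σ (τ n)) χ
  | .var n => rfl
  | .neg χ => by simp only [PForm.psubst, PForm.eval, eval_psubst σ τ χ]
  | .imp χ ρ => by
      simp only [PForm.psubst, PForm.eval, eval_psubst σ τ χ, eval_psubst σ τ ρ]

/-- Propositional disjunction. -/
def PForm.por (a b : PForm) : PForm := .imp (.imp a b) b
/-- Propositional conjunction. -/
def PForm.pand (a b : PForm) : PForm := .neg (PForm.por (.neg a) (.neg b))
/-- Propositional biconditional. -/
def PForm.piff (a b : PForm) : PForm := PForm.pand (.imp a b) (.imp b a)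

lemma subst_pand (σ : ℕ → Formula) (A B : PForm) :
    PForm.subst σ (PForm.pand A B) =
      Formula.and (PForm.subst σ A) (PForm.subst σ B) := rfl

lemma subst_piff (σ : ℕ → Formula) (A B : PForm) :
    PForm.subst σ (PForm.piff A B) =
      Formula.iff (PForm.subst σ A) (PForm.subst σ B) := rfl

lemma eval_pand {σ : ℕ → ℝ} (hσ : ∀ n, σ n ∈ Set.Icc (0:ℝ) 1) (A B : PForm) :
    PForm.eval σ (PForm.pand A B) = min (PForm.eval σ A) (PForm.eval σ B) := by
  have hA := eval_mem_Icc hσ A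
  have hB := eval_mem_Icc hσ B
  set a := PForm.eval σ A
  set b := PForm.eval σ B
  show lneg (limp (limp (lneg a) (lneg b)) (lneg b)) = min a b
  simp only [Set.mem_Icc] at hA hB
  unfold lneg limp
  rcases le_total a b with h | h
  · rw [min_eq_right (by linarith : (1:ℝ) - (1 - a) + (1 - b) ≤ 1)]
    rw [min_eq_right (by linarith : (1:ℝ) - (1 - (1 - a) + (1 - b)) + (1 - b) ≤ 1)]
    rw [min_eq_left h]
    ring
  · rw [min_eq_left (by linarith : (1:ℝ) ≤ 1 - (1 - a) + (1 - b))]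
    rw [min_eq_right (by linarith : (1:ℝ) - 1 + (1 - b) ≤ 1)]
    rw [min_eq_right h]
    ring

lemma eval_piff {σ : ℕ → ℝ} (hσ : ∀ n, σ n ∈ Set.Icc (0:ℝ) 1) (A B : PForm) :
    PForm.eval σ (PForm.piff A B) = 1 - |PForm.eval σ A - PForm.eval σ B| := by
  show PForm.eval σ (PForm.pand (.imp A B) (.imp B A)) = _
  rw [eval_pand hσ]
  show min (limp _ _) (limp _ _) = _
  exact piff_val _ _

end WellDefAux
section WellDefAux2

variable {m : ℕ}

open PForm in
/-- A copy of the J-defining formula with all variables renamed to `k`. -/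
def Qv (P : Fin m → PForm) (k : ℕ) (i : Fin m) : PForm :=
  PForm.psubst (fun _ => .var k) (P i)

lemma Qv_subst (P : Fin m → PForm) (σ : ℕ → Formula) (k : ℕ) (i : Fin m) :
    PForm.subst σ (Qv P k i) = PForm.subst (fun _ => σ k) (P i) := by
  unfold Qv
  rw [subst_psubst]
  rfl

lemma Qv_eval (P : Fin m → PForm)
    (hP2 : ∀ (a : Fin m) (σ : ℕ → ℝ), (∀ n, σ n ∈ Tset m) →
      PForm.eval σ (P a) = if σ 0 = tv m a then 1 else 0)
    (σ : ℕ → ℝ) (hσ : ∀ n, σ n ∈ Tset m) (k : ℕ) (i : Fin m) :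
    PForm.eval σ (Qv P k i) = if σ k = tv m i then 1 else 0 := by
  unfold Qv
  rw [eval_psubst]
  exact hP2 i _ (fun n => hσ k)

/-- Nested implications at the propositional level. -/
def chainImp : List PForm → PForm → PForm
  | [], C => C
  | A :: L, C => .imp A (chainImp L C)

lemma chain_mp {I : Fin m → Formula → Formula} (σ : ℕ → Formula) :
    ∀ (L : List PForm) (C : PForm),
      Thm m I (PForm.subst σ (chainImp L C)) →
      (∀ A ∈ L, Thm m I (PForm.subst σ A)) → Thm m I (PForm.subst σ C)
  | [], _, h, _ => h
  | A :: L, C, h, hA =>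
      chain_mp σ L C
        (Thm.mp _ _ h (hA A (by simp)))
        (fun B hB => hA B (by simp [hB]))

lemma chain_eval_of_target {σ : ℕ → ℝ} (hσ : ∀ n, σ n ∈ Set.Icc (0:ℝ) 1) :
    ∀ (L : List PForm) (C : PForm), PForm.eval σ C = 1 →
      PForm.eval σ (chainImp L C) = 1
  | [], _, h => h
  | A :: L, C, h => by
      have ih := chain_eval_of_target hσ L C h
      show limp (PForm.eval σ A) (PForm.eval σ (chainImp L C)) = 1
      rw [ih]
      exact limp_one_right' (eval_mem_Icc hσ A).2

lemma chain_eval_of_zero {σ : ℕ → ℝ} (hσ : ∀ n, σ n ∈ Set.Icc (0:ℝ) 1) :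
    ∀ (L : List PForm) (C A : PForm), A ∈ L → PForm.eval σ A = 0 →
      PForm.eval σ (chainImp L C) = 1
  | [], _, _, h, _ => absurd h List.not_mem_nil
  | B :: L, C, A, hmem, h0 => by
      simp only [List.mem_cons] at hmem
      show limp (PForm.eval σ B) (PForm.eval σ (chainImp L C)) = 1
      rcases hmem with rfl | hmem
      · rw [h0]
        exact limp_zero_left' (eval_mem_Icc hσ _).1
      · rw [chain_eval_of_zero hσ L C A hmem h0]
        exact limp_one_right' (eval_mem_Icc hσ B).2

lemma chain_replicate_ge {σ : ℕ → ℝ} (hσ : ∀ n, σ n ∈ Set.Icc (0:ℝ) 1)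
    (A C : PForm) :
    ∀ k : ℕ, min 1 ((k:ℝ) * (1 - PForm.eval σ A) + PForm.eval σ C)
      ≤ PForm.eval σ (chainImp (List.replicate k A) C)
  | 0 => by
      rw [show (((0:ℕ)):ℝ) * (1 - PForm.eval σ A) + PForm.eval σ C
          = PForm.eval σ C by push_cast; ring]
      exact min_le_right _ _
  | (k+1) => by
      have ih := chain_replicate_ge hσ A C k
      have ha := eval_mem_Icc hσ A
      simp only [Set.mem_Icc] at ha
      have hstep : PForm.eval σ (chainImp (List.replicate (k+1) A) C) =
          limp (PForm.eval σ A) (PForm.eval σ (chainImp (List.replicate k A) C)) := by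
        rw [List.replicate_succ]
        rfl
      rw [hstep]
      set a := PForm.eval σ A
      set c := PForm.eval σ C
      set F := PForm.eval σ (chainImp (List.replicate k A) C)
      unfold limp
      have hexp : (((k:ℕ)+1:ℕ):ℝ) * (1 - a) = (k:ℝ) * (1 - a) + (1 - a) := by
        push_cast
        ring
      apply le_min (min_le_left _ _)
      rcases le_total (1:ℝ) ((k:ℝ) * (1 - a) + c) with h | h
      · have : (1:ℝ) ≤ F := le_trans (by rw [min_eq_left h]) ih
        have h2 : min (1:ℝ) ((((k:ℕ)+1:ℕ):ℝ) * (1 - a) + c) ≤ 1 := min_le_left _ _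
        linarith
      · have : (k:ℝ) * (1 - a) + c ≤ F := le_trans (by rw [min_eq_right h]) ih
        have h2 : min (1:ℝ) ((((k:ℕ)+1:ℕ):ℝ) * (1 - a) + c) ≤
            (((k:ℕ)+1:ℕ):ℝ) * (1 - a) + c := min_le_right _ _
        linarith

lemma chain_replicate_eq_one {σ : ℕ → ℝ} (hσ : ∀ n, σ n ∈ Set.Icc (0:ℝ) 1)
    (A C : PForm) (k : ℕ)
    (hk : 1 ≤ (k:ℝ) * (1 - PForm.eval σ A))
    (hC : 0 ≤ PForm.eval σ C) :
    PForm.eval σ (chainImp (List.replicate k A) C) = 1 := by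
  have hge := chain_replicate_ge hσ A C k
  have : min (1:ℝ) ((k:ℝ) * (1 - PForm.eval σ A) + PForm.eval σ C) = 1 :=
    min_eq_left (by linarith)
  rw [this] at hge
  exact le_antisymm (eval_mem_Icc hσ _).2 hge

end WellDefAux2
section WellDefAux3

variable {m : ℕ}

/-- Hypothesis bundle: `P` is the family of defining formulas for the J-operators. -/
def JDef (m : ℕ) (P : Fin m → PForm) : Prop :=
  ∀ (a : Fin m) (σ : ℕ → ℝ), (∀ n, σ n ∈ Tset m) →
    PForm.eval σ (P a) = if σ 0 = tv m a then 1 else 0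

lemma taut_id : PForm.Taut m (.imp (.var 0) (.var 0)) := by
  intro σ hσ
  exact limp_self' _

lemma taut_weak (hm : 2 ≤ m) :
    PForm.Taut m (.imp (.var 1) (.imp (.var 0) (.var 1))) := by
  intro σ hσ
  have h0 := Tset_subset_Icc hm (hσ 0)
  have h1 := Tset_subset_Icc hm (hσ 1)
  simp only [Set.mem_Icc] at h0 h1
  show limp (σ 1) (limp (σ 0) (σ 1)) = 1
  apply limp_eq_one
  exact le_min h1.2 (by linarith)

lemma taut_KQ (hm : 2 ≤ m) (P : Fin m → PForm) (hP2 : JDef m P) (i : Fin m) :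
    PForm.Taut m (.imp (.imp (Qv P 0 i) (.imp (.var 1) (.var 2)))
      (.imp (.imp (Qv P 0 i) (.var 1)) (.imp (Qv P 0 i) (.var 2)))) := by
  intro σ hσ
  have hb : ∀ n, σ n ∈ Set.Icc (0:ℝ) 1 := fun n => Tset_subset_Icc hm (hσ n)
  have h1 := hb 1
  have h2 := hb 2
  simp only [Set.mem_Icc] at h1 h2
  have hq := Qv_eval P hP2 σ hσ 0 i
  show limp (limp (PForm.eval σ (Qv P 0 i)) (limp (σ 1) (σ 2)))
    (limp (limp (PForm.eval σ (Qv P 0 i)) (σ 1))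
      (limp (PForm.eval σ (Qv P 0 i)) (σ 2))) = 1
  rw [hq]
  split_ifs with h
  · rw [limp_one_left' (limp_le_one' _ _), limp_one_left' h1.2, limp_one_left' h2.2]
    exact limp_self' _
  · rw [limp_zero_left' (limp_nonneg' h1.2 h2.1), limp_zero_left' h1.1,
      limp_zero_left' h2.1, limp_self' 1]
    exact limp_self' 1

lemma taut_EQ (hm : 2 ≤ m) (P : Fin m → PForm) (hP2 : JDef m P) (i : Fin m) :
    PForm.Taut m (.imp (.imp (Qv P 0 i) (.var 1))
      (.imp (.imp (Qv P 0 i) (.neg (.var 1))) (.imp (Qv P 0 i) (.var 2)))) := by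
  intro σ hσ
  have hb : ∀ n, σ n ∈ Set.Icc (0:ℝ) 1 := fun n => Tset_subset_Icc hm (hσ n)
  have h1 := hb 1
  have h2 := hb 2
  simp only [Set.mem_Icc] at h1 h2
  have hq := Qv_eval P hP2 σ hσ 0 i
  show limp (limp (PForm.eval σ (Qv P 0 i)) (σ 1))
    (limp (limp (PForm.eval σ (Qv P 0 i)) (lneg (σ 1)))
      (limp (PForm.eval σ (Qv P 0 i)) (σ 2))) = 1
  rw [hq]
  split_ifs with h
  · rw [limp_one_left' h1.2, limp_one_left' (by unfold lneg; linarith : lneg (σ 1) ≤ 1),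
      limp_one_left' h2.2]
    apply limp_eq_one
    refine le_min h1.2 ?_
    unfold lneg
    linarith
  · rw [limp_zero_left' h1.1, limp_zero_left' (by unfold lneg; linarith : 0 ≤ lneg (σ 1)),
      limp_zero_left' h2.1, limp_self' 1]
    exact limp_self' 1

lemma taut_pair (hm : 2 ≤ m) :
    PForm.Taut m (.imp (.var 0) (.imp (.var 1) (PForm.pand (.var 0) (.var 1)))) := by
  intro σ hσ
  have hb : ∀ n, σ n ∈ Set.Icc (0:ℝ) 1 := fun n => Tset_subset_Icc hm (hσ n)
  have h0 := hb 0
  have h1 := hb 1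
  simp only [Set.mem_Icc] at h0 h1
  show limp (σ 0) (limp (σ 1) (PForm.eval σ (PForm.pand (.var 0) (.var 1)))) = 1
  rw [eval_pand hb]
  show limp (σ 0) (limp (σ 1) (min (σ 0) (σ 1))) = 1
  apply limp_eq_one
  refine le_min h0.2 ?_
  rcases le_total (σ 0) (σ 1) with h | h
  · rw [min_eq_left h]; linarith
  · rw [min_eq_right h]; linarith

lemma taut_fst (hm : 2 ≤ m) :
    PForm.Taut m (.imp (PForm.pand (.var 0) (.var 1)) (.var 0)) := by
  intro σ hσ
  have hb : ∀ n, σ n ∈ Set.Icc (0:ℝ) 1 := fun n => Tset_subset_Icc hm (hσ n)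
  show limp (PForm.eval σ (PForm.pand (.var 0) (.var 1))) (σ 0) = 1
  rw [eval_pand hb]
  exact limp_eq_one (min_le_left _ _)

lemma taut_snd (hm : 2 ≤ m) :
    PForm.Taut m (.imp (PForm.pand (.var 0) (.var 1)) (.var 1)) := by
  intro σ hσ
  have hb : ∀ n, σ n ∈ Set.Icc (0:ℝ) 1 := fun n => Tset_subset_Icc hm (hσ n)
  show limp (PForm.eval σ (PForm.pand (.var 0) (.var 1))) (σ 1) = 1
  rw [eval_pand hb]
  exact limp_eq_one (min_le_right _ _)

lemma taut_big (hm : 2 ≤ m) (P : Fin m → PForm) (hP2 : JDef m P) :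
    PForm.Taut m (chainImp
      ((List.finRange m).map fun i => PForm.piff (Qv P 0 i) (Qv P 1 i))
      (PForm.piff (.var 0) (.var 1))) := by
  intro σ hσ
  have hb : ∀ n, σ n ∈ Set.Icc (0:ℝ) 1 := fun n => Tset_subset_Icc hm (hσ n)
  by_cases h : σ 0 = σ 1
  · apply chain_eval_of_target hb
    rw [eval_piff hb]
    show 1 - |σ 0 - σ 1| = 1
    rw [h]
    simp
  · obtain ⟨i, hi⟩ := hσ 0
    have hi' : σ 0 = tv m i := hi
    refine chain_eval_of_zero hb _ _ (PForm.piff (Qv P 0 i) (Qv P 1 i)) ?_ ?_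
    · exact List.mem_map.mpr ⟨i, List.mem_finRange i, rfl⟩
    · rw [eval_piff hb, Qv_eval P hP2 σ hσ 0 i, Qv_eval P hP2 σ hσ 1 i,
        if_pos hi', if_neg (fun hh : σ 1 = tv m i => h (hi'.trans hh.symm))]
      norm_num

lemma taut_cong (hm : 2 ≤ m) (P : Fin m → PForm) (hP2 : JDef m P) (a : Fin m) :
    PForm.Taut m (chainImp (List.replicate (m-1) (PForm.piff (.var 0) (.var 1)))
      (PForm.piff (Qv P 0 a) (Qv P 1 a))) := by
  intro σ hσ
  have hb : ∀ n, σ n ∈ Set.Icc (0:ℝ) 1 := fun n => Tset_subset_Icc hm (hσ n)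
  by_cases h : σ 0 = σ 1
  · apply chain_eval_of_target hb
    rw [eval_piff hb, Qv_eval P hP2 σ hσ 0 a, Qv_eval P hP2 σ hσ 1 a, h]
    simp
  · have hC : (0:ℝ) ≤ PForm.eval σ (PForm.piff (Qv P 0 a) (Qv P 1 a)) :=
      (eval_mem_Icc hb _).1
    have hA : PForm.eval σ (PForm.piff (.var 0) (.var 1)) = 1 - |σ 0 - σ 1| :=
      eval_piff hb _ _
    have hd : 1 / ((m:ℝ) - 1) ≤ |σ 0 - σ 1| := tv_diff hm (hσ 0) (hσ 1) h
    have hm1 : ((m - 1 : ℕ) : ℝ) = (m:ℝ) - 1 := by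
      have : 1 ≤ m := by omega
      push_cast [this]
      ring
    have hpos : (0:ℝ) < (m:ℝ) - 1 := by
      have : (2:ℝ) ≤ (m:ℝ) := by exact_mod_cast hm
      linarith
    have hk : 1 ≤ ((m - 1 : ℕ) : ℝ) *
        (1 - PForm.eval σ (PForm.piff (.var 0) (.var 1))) := by
      rw [hA, hm1]
      have h1 := mul_le_mul_of_nonneg_left hd hpos.le
      rw [mul_one_div, div_self hpos.ne'] at h1
      calc (1:ℝ) ≤ ((m:ℝ) - 1) * |σ 0 - σ 1| := h1
      _ = ((m:ℝ) - 1) * (1 - (1 - |σ 0 - σ 1|)) := by ring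
    exact chain_replicate_eq_one hb _ _ _ hk hC

end WellDefAux3
section WellDefAux4

variable {m : ℕ} {I : Fin m → Formula → Formula}

lemma thm_imp_self (χ : Formula) : Thm m I (.imp χ χ) :=
  Thm.taut (.imp (.var 0) (.var 0)) (fun _ => χ) taut_id

lemma thm_weaken (hm : 2 ≤ m) (χ ρ : Formula) (h : Thm m I ρ) :
    Thm m I (.imp χ ρ) := by
  have h1 := Thm.taut (m := m) (I := I) (.imp (.var 1) (.imp (.var 0) (.var 1)))
    (fun n => if n = 0 then χ else ρ) (taut_weak hm)
  simp only [PForm.subst] at h1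
  norm_num at h1
  exact Thm.mp _ _ h1 h

lemma deduction (hm : 2 ≤ m) (J : Fin m → Formula → Formula) (P : Fin m → PForm)
    (hP1 : ∀ a φ, J a φ = PForm.subst (fun _ => φ) (P a))
    (hP2 : JDef m P) (i : Fin m) (φ : Formula) :
    ∀ ρ : Formula, Deriv m I {J i φ} ρ → Thm m I (.imp (J i φ) ρ) := by
  intro ρ h
  induction h with
  | thm ρ h => exact thm_weaken hm _ _ h
  | mem ρ h =>
      rw [Set.mem_singleton_iff] at h
      subst h
      exact thm_imp_self _
  | mp ρ ρ' h1 h2 ih1 ih2 =>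
      have inst := Thm.taut (m := m) (I := I) _
        (fun n => if n = 0 then φ else if n = 1 then ρ else ρ') (taut_KQ hm P hP2 i)
      have hq : PForm.subst (fun n => if n = 0 then φ else if n = 1 then ρ else ρ')
          (Qv P 0 i) = J i φ := by
        rw [Qv_subst]
        norm_num
        exact (hP1 i φ).symm
      simp only [PForm.subst, hq] at inst
      norm_num at inst
      exact Thm.mp _ _ (Thm.mp _ _ inst ih1) ih2

lemma deriv_deriv {Γ : Set Formula} :
    ∀ ρ, Deriv m I {δ | Deriv m I Γ δ} ρ → Deriv m I Γ ρ := by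
  intro ρ h
  induction h with
  | thm ρ h => exact Deriv.thm _ h
  | mem ρ h => exact h
  | mp ρ ρ' h1 h2 ih1 ih2 => exact Deriv.mp _ _ ih1 ih2

lemma half_imp (hm : 2 ≤ m) (J : Fin m → Formula → Formula) (P : Fin m → PForm)
    (hP1 : ∀ a φ, J a φ = PForm.subst (fun _ => φ) (P a))
    (hP2 : JDef m P) (φ ψ : Formula)
    (hs : ∀ Γ : Set Formula, MaxConsistent m I Γ → ∀ i : Fin m, J i φ ∈ Γ → J i ψ ∈ Γ)
    (i : Fin m) : Thm m I (.imp (J i φ) (J i ψ)) := by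
  by_cases hc : ∃ ρ, Deriv m I {J i φ} ρ ∧ Deriv m I {J i φ} (.neg ρ)
  · obtain ⟨ρ, h1, h2⟩ := hc
    have d1 := deduction hm J P hP1 hP2 i φ ρ h1
    have d2 := deduction hm J P hP1 hP2 i φ (.neg ρ) h2
    have inst := Thm.taut (m := m) (I := I) _
      (fun n => if n = 0 then φ else if n = 1 then ρ else J i ψ) (taut_EQ hm P hP2 i)
    have hq : PForm.subst (fun n => if n = 0 then φ else if n = 1 then ρ else J i ψ)
        (Qv P 0 i) = J i φ := by
      rw [Qv_subst]
      norm_num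
      exact (hP1 i φ).symm
    simp only [PForm.subst, hq] at inst
    norm_num at inst
    exact Thm.mp _ _ (Thm.mp _ _ inst d1) d2
  · have hmax : MaxConsistent m I {δ | Deriv m I {J i φ} δ} := by
      constructor
      · rintro ⟨δ, a, b⟩
        exact hc ⟨δ, deriv_deriv _ a, deriv_deriv _ b⟩
      · intro δ hδ
        exact deriv_deriv _ hδ
    have hmem : J i φ ∈ {δ | Deriv m I {J i φ} δ} := Deriv.mem _ rfl
    have := hs _ hmax i hmem
    exact deduction hm J P hP1 hP2 i φ _ this

lemma thm_iff_intro (hm : 2 ≤ m) (A B : Formula)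
    (h1 : Thm m I (.imp A B)) (h2 : Thm m I (.imp B A)) :
    Thm m I (Formula.iff A B) := by
  have inst := Thm.taut (m := m) (I := I) _
    (fun n => if n = 0 then Formula.imp A B else Formula.imp B A) (taut_pair hm)
  simp only [PForm.subst, subst_pand] at inst
  norm_num at inst
  exact Thm.mp _ _ (Thm.mp _ _ inst h1) h2

lemma thm_iff_mp (hm : 2 ≤ m) (A B : Formula)
    (h : Thm m I (Formula.iff A B)) : Thm m I (.imp A B) := by
  have inst := Thm.taut (m := m) (I := I) _
    (fun n => if n = 0 then Formula.imp A B else Formula.imp B A) (taut_fst hm)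
  simp only [PForm.subst, subst_pand] at inst
  norm_num at inst
  exact Thm.mp _ _ inst h

lemma thm_iff_mpr (hm : 2 ≤ m) (A B : Formula)
    (h : Thm m I (Formula.iff A B)) : Thm m I (.imp B A) := by
  have inst := Thm.taut (m := m) (I := I) _
    (fun n => if n = 0 then Formula.imp A B else Formula.imp B A) (taut_snd hm)
  simp only [PForm.subst, subst_pand] at inst
  norm_num at inst
  exact Thm.mp _ _ inst h

end WellDefAux4
/-- well-definedness of the canonical accessibility relation: if
/φ/ = /ψ/ then the two defining infima agree on all maximal consistent x, y. -/
theorem canonR_well_defined (m : ℕ) (hm : 2 ≤ m)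
    (J : Fin m → Formula → Formula) (hJ : IsJFamily m J)
    (I : Fin m → Formula → Formula) (hI : IsIFamily m I)
    (φ ψ : Formula)
    (hsame : ∀ Γ : Set Formula, MaxConsistent m I Γ →
      ∀ i : Fin m, (J i φ ∈ Γ ↔ J i ψ ∈ Γ))
    (x y : Set Formula) (hx : MaxConsistent m I x) (hy : MaxConsistent m I y) :
    canonR m J x y φ = canonR m J x y ψ := by
  obtain ⟨P, hP1, hP2⟩ := hJ
  have hP2' : JDef m P := hP2
  -- Step 1: ⊢ J i φ ↔ J i ψ for each i.
  have jiff : ∀ i : Fin m, Thm m I (Formula.iff (J i φ) (J i ψ)) := by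
    intro i
    refine thm_iff_intro hm _ _ ?_ ?_
    · exact half_imp hm J P hP1 hP2' φ ψ (fun Γ hΓ i h => (hsame Γ hΓ i).mp h) i
    · exact half_imp hm J P hP1 hP2' ψ φ (fun Γ hΓ i h => (hsame Γ hΓ i).mpr h) i
  -- Step 2: ⊢ φ ↔ ψ.
  have hiff : Thm m I (Formula.iff φ ψ) := by
    have hchain := Thm.taut (m := m) (I := I) _
      (fun n => match n with | 0 => φ | _ => ψ) (taut_big hm P hP2')
    have hmem : ∀ A ∈ (List.finRange m).map
        (fun i => PForm.piff (Qv P 0 i) (Qv P 1 i)),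
        Thm m I (PForm.subst (fun n => match n with | 0 => φ | _ => ψ) A) := by
      intro A hA
      simp only [List.mem_map] at hA
      obtain ⟨i, _, rfl⟩ := hA
      rw [subst_piff, Qv_subst, Qv_subst]
      have h := jiff i
      rw [hP1 i φ, hP1 i ψ] at h
      exact h
    have hmp := chain_mp (fun n => match n with | 0 => φ | _ => ψ) _ _ hchain hmem
    rw [subst_piff] at hmp
    exact hmp
  -- Step 3: ⊢ (φ ≻ θ) ↔ (ψ ≻ θ) and ⊢ J a (φ ≻ θ) ↔ J a (ψ ≻ θ).
  have hJc : ∀ (a : Fin m) (θ : Formula),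
      Thm m I (Formula.iff (J a (.cond φ θ)) (J a (.cond ψ θ))) := by
    intro a θ
    have hchain := Thm.taut (m := m) (I := I) _
      (fun n => match n with | 0 => Formula.cond φ θ | _ => Formula.cond ψ θ)
      (taut_cong hm P hP2' a)
    have hmem : ∀ A ∈ List.replicate (m-1) (PForm.piff (.var 0) (.var 1)),
        Thm m I (PForm.subst
          (fun n => match n with | 0 => Formula.cond φ θ | _ => Formula.cond ψ θ) A) := by
      intro A hA
      rw [List.eq_of_mem_replicate hA, subst_piff]
      exact Thm.rcea φ ψ θ hiff
    have hmp := chain_mp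
      (fun n => match n with | 0 => Formula.cond φ θ | _ => Formula.cond ψ θ)
      _ _ hchain hmem
    rw [subst_piff, Qv_subst, Qv_subst] at hmp
    rw [hP1 a (Formula.cond φ θ), hP1 a (Formula.cond ψ θ)]
    exact hmp
  -- Step 4: membership transfer in the maximal consistent set x.
  have memiff : ∀ (a : Fin m) (θ : Formula),
      J a (.cond φ θ) ∈ x ↔ J a (.cond ψ θ) ∈ x := by
    intro a θ
    constructor
    · intro h
      exact hx.2 _ (Deriv.mp _ _ (Deriv.thm _ (thm_iff_mp hm _ _ (hJc a θ)))
        (Deriv.mem _ h))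
    · intro h
      exact hx.2 _ (Deriv.mp _ _ (Deriv.thm _ (thm_iff_mpr hm _ _ (hJc a θ)))
        (Deriv.mem _ h))
  -- Step 5: the two defining sets coincide.
  unfold canonR
  congr 1
  ext r
  constructor
  · rintro ⟨a, b, θ, h1, h2, h3⟩
    exact ⟨a, b, θ, (memiff a θ).mp h1, h2, h3⟩
  · rintro ⟨a, b, θ, h1, h2, h3⟩
    exact ⟨a, b, θ, (memiff a θ).mpr h1, h2, h3⟩

end LCR
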